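/- Angle lower bound for optimum tours: Let T be an optimum tour of a planar EUC_2D TSP instance containing edge pq, and let r ∉ {p,q} with tour-neighbors x, y. Let δ_r > 0 satisfy |rs| ≥ δ_r for all vertices s ≠ r, let l_p = δ_r + l(pq) − l(qr) − 1 and l_q = δ_r + l(pq) − l(pr) − 1, and assume l_p + l_q ≥ l(pq) − 1/2. Then the angle γ = ∠(x r y) satisfies cos γ ≤ 1 − (l_p + l_q − l(pq) + 1/2)² / (2 δ_r²); equivalently γ ≥ γ_r := arccos(1 − (l_p + l_q − l(pq) + 1/2)²/(2δ_r²)). -/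

import Mathlib

/-!
Moving `r` out of the stretch `y r x` of the tour and in between `p` and `q` gives another
tour, so optimality yields `l(pq) + l(rx) + l(ry) ≤ l(pr) + l(qr) + l(xy)`. After rounding
to Euclidean distances this says that once the legs `rx`, `ry` are cut down to length `δ`,
the remaining chord is still at least `l_p + l_q - l(pq) + 1/2` long; the law of cosines for
the isosceles triangle with legs `δ` converts that into the bound on `cos γ`.
-/

open EuclideanGeometry

/-- The Euclidean plane. -/
abbrev Plane := EuclideanSpace ℝ (Fin 2)

/-- A tour (Hamiltonian cycle), encoded as a cyclic permutation with no fixed points. -/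
def IsTour {V : Type*} [Fintype V] (σ : Equiv.Perm V) : Prop :=
  σ.IsCycle ∧ ∀ v : V, σ v ≠ v

/-- The length of a tour. -/
noncomputable def tourLength {V : Type*} [Fintype V] (l : V → V → ℝ)
    (σ : Equiv.Perm V) : ℝ :=
  ∑ v, l v (σ v)

/-- An optimum tour: a tour of minimum length. -/
def IsOptimumTour {V : Type*} [Fintype V] (l : V → V → ℝ) (σ : Equiv.Perm V) : Prop :=
  IsTour σ ∧ ∀ τ : Equiv.Perm V, IsTour τ → tourLength l σ ≤ tourLength l τ

/-- The edge `{a,b}` belongs to the tour `σ`. -/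
def edgeIn {V : Type*} [Fintype V] (σ : Equiv.Perm V) (a b : V) : Prop :=
  σ a = b ∨ σ b = a

namespace Equiv.Perm

variable {α : Type*} [DecidableEq α] {f : Perm α} {a b : α}

theorem sameCycle_mul_swap_pow_apply (ha : f a ≠ a) (hb : f b = b) (n : ℕ) :
    (f * swap a b).SameCycle a ((f ^ n) a) := by
  have hab : a ≠ b := fun h => ha (h ▸ hb)
  induction n with
  | zero => rfl
  | succ n ih =>
    rw [pow_succ', mul_apply]
    by_cases hn : (f ^ n) a = a
    · have hfa : f a = (f * swap a b) ((f * swap a b) a) := by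
        simp [swap_apply_left, swap_apply_right, hb]
      rw [hn, hfa, sameCycle_apply_right, sameCycle_apply_right]
    · have hnb : (f ^ n) a ≠ b := fun h =>
        hab ((f ^ n).injective (h.trans (pow_apply_eq_self_of_apply_eq_self hb n).symm))
      have : f ((f ^ n) a) = (f * swap a b) ((f ^ n) a) := by
        rw [mul_apply, swap_apply_of_ne_of_ne hn hnb]
      rw [this, sameCycle_apply_right]
      exact ih

theorem IsCycle.mul_swap_of_apply_eq_self [Finite α] (hf : f.IsCycle) (ha : f a ≠ a)
    (hb : f b = b) : (f * swap a b).IsCycle := by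
  have hab : a ≠ b := fun h => ha (h ▸ hb)
  refine ⟨a, by simpa [hb] using hab.symm, fun v hv => ?_⟩
  by_cases hvb : v = b
  · simpa [hvb, hb] using (SameCycle.refl (f * swap a b) a).apply_right
  by_cases hva : v = a
  · rw [hva]
  rw [mul_apply, swap_apply_of_ne_of_ne hva hvb] at hv
  obtain ⟨n, -, rfl⟩ := (hf.sameCycle ha hv).exists_nat_pow_eq
  exact sameCycle_mul_swap_pow_apply ha hb n

theorem support_mul_swap_of_apply_eq_self [Fintype α] (ha : f a ≠ a) (hb : f b = b) :
    (f * swap a b).support = insert b f.support := by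
  have hab : a ≠ b := fun h => ha (h ▸ hb)
  ext v
  by_cases hva : v = a
  · subst hva; simp [hb, ha, Ne.symm hab]
  by_cases hvb : v = b
  · subst hvb
    have hfa : f a ≠ v := fun h => hab (f.injective (h.trans hb.symm))
    simp [hb, hfa]
  simp [swap_apply_of_ne_of_ne hva hvb, hvb]

end Equiv.Perm

open Equiv Equiv.Perm

section Relocate

variable {V : Type*} [Fintype V] {σ : Perm V} {p r : V}

theorem tourLength_sub_tourLength (l : V → V → ℝ) {τ : Perm V} (s : Finset V)
    (h : ∀ v ∉ s, τ v = σ v) :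
    tourLength l τ - tourLength l σ = ∑ v ∈ s, (l v (τ v) - l v (σ v)) := by
  rw [tourLength, tourLength, ← Finset.sum_sub_distrib]
  refine (Finset.sum_subset (Finset.subset_univ s) fun v _ hv => ?_).symm
  rw [h v hv, sub_self]

variable [DecidableEq V]

/-- `swap r (σ r) * σ` short-cuts `r` out of the tour `σ`; composing with `swap p r` then
reinserts `r` between `p` and `σ p`. -/
def relocate (σ : Perm V) (r p : V) : Perm V :=
  swap r (σ r) * σ * swap p r

theorem IsTour.apply_apply_ne (hσ : IsTour σ) (hpr : p ≠ r) (hr : σ p ≠ r) :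
    σ (σ r) ≠ r := by
  intro h
  have hswap := hσ.1.eq_swap_of_apply_apply_eq_self (hσ.2 r) h
  by_cases hp : p = σ r
  · exact hr (hp ▸ h)
  · exact hσ.2 p (by rw [hswap, swap_apply_of_ne_of_ne hpr hp])

theorem IsTour.relocate (hσ : IsTour σ) (hpr : p ≠ r) (hr : σ p ≠ r) :
    IsTour (relocate σ r p) := by
  have hσσr := hσ.apply_apply_ne hpr hr
  have hsupp : σ.support = Finset.univ := by
    ext v; simp [hσ.2 v]
  have hcut : (swap r (σ r) * σ).support = Finset.univ \ {r} := by
    rw [support_swap_mul_eq σ r hσσr, hsupp]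
  have hp : (swap r (σ r) * σ) p ≠ p := by
    rw [← mem_support, hcut]; simpa using hpr
  have hr' : (swap r (σ r) * σ) r = r := by
    rw [← notMem_support, hcut]; simp
  refine ⟨(hσ.1.swap_mul (hσ.2 r) hσσr).mul_swap_of_apply_eq_self hp hr', fun v => ?_⟩
  rw [← mem_support]
  show v ∈ (swap r (σ r) * σ * swap p r).support
  rw [support_mul_swap_of_apply_eq_self hp hr', hcut]
  by_cases hv : v = r <;> simp [hv]

theorem tourLength_relocate (l : V → V → ℝ) (hpr : p ≠ r) (hr : σ p ≠ r) (hσr : σ r ≠ r) :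
    tourLength l (relocate σ r p) + l p (σ p) + l r (σ r) + l (σ⁻¹ r) r =
      tourLength l σ + l p r + l r (σ p) + l (σ⁻¹ r) (σ r) := by
  set y := σ⁻¹ r
  have hy : σ y = r := σ.apply_symm_apply r
  have hyp : y ≠ p := fun h => hr (h ▸ hy)
  have hyr : y ≠ r := fun h => hσr (h ▸ hy)
  have hσpσr : σ p ≠ σ r := σ.injective.ne hpr
  have hp : relocate σ r p p = r := by simp [relocate]
  have hrr : relocate σ r p r = σ p := by
    simp [relocate, swap_apply_of_ne_of_ne hr hσpσr]
  have hyy : relocate σ r p y = σ r := by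
    simp [relocate, swap_apply_of_ne_of_ne hyp hyr, hy]
  have hsame : ∀ v ∉ ({p, r, y} : Finset V), relocate σ r p v = σ v := by
    intro v hv
    simp only [Finset.mem_insert, Finset.mem_singleton, not_or] at hv
    obtain ⟨hvp, hvr, hvy⟩ := hv
    have hσv : σ v ≠ r := fun h => hvy (σ.eq_inv_iff_eq.mpr h)
    simp [relocate, swap_apply_of_ne_of_ne hvp hvr,
      swap_apply_of_ne_of_ne hσv (σ.injective.ne hvr)]
  have hdiff := tourLength_sub_tourLength l _ hsame
  rw [Finset.sum_insert (by simp [hpr, hyp.symm]), Finset.sum_insert (by simp [hyr.symm]),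
    Finset.sum_singleton, hp, hrr, hyy, hy] at hdiff
  linarith

theorem IsOptimumTour.relocate_le {l : V → V → ℝ} (hσ : IsOptimumTour l σ) (hpr : p ≠ r)
    (hr : σ p ≠ r) :
    l p (σ p) + l r (σ r) + l (σ⁻¹ r) r ≤ l p r + l r (σ p) + l (σ⁻¹ r) (σ r) := by
  have := hσ.2 _ (hσ.1.relocate hpr hr)
  have := tourLength_relocate l hpr hr (hσ.1.2 r)
  linarith

end Relocate

section Geometry

variable {E P : Type*} [NormedAddCommGroup E] [InnerProductSpace ℝ E] [MetricSpace P]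
  [NormedAddTorsor E P]

theorem exists_wbtw_dist_eq {C A : P} {δ : ℝ} (hδ : 0 ≤ δ) (hA : δ ≤ dist C A) :
    ∃ A', Wbtw ℝ C A' A ∧ dist C A' = δ := by
  have hCA : 0 ≤ dist C A := hδ.trans hA
  refine ⟨AffineMap.lineMap C A (δ / dist C A), ?_, ?_⟩
  · exact wbtw_lineMap_iff.2 (.inr ⟨div_nonneg hδ hCA, div_le_one_of_le₀ hA hCA⟩)
  · rcases hCA.eq_or_lt with h | h
    · rw [← h] at hA ⊢
      simp [le_antisymm hA hδ]
    · rw [dist_left_lineMap, Real.norm_of_nonneg (div_nonneg hδ h.le), div_mul_cancel₀ _ h.ne']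

/-- Shrinking both legs of the angle at `C` to length `δ` shortens the third side by at most
the removed lengths, and the law of cosines evaluates the shortened side. -/
theorem cos_angle_le_one_sub_sq_div {A B C : P} {δ M : ℝ} (hδ : 0 < δ) (hA : δ ≤ dist C A)
    (hB : δ ≤ dist C B) (hM0 : 0 ≤ M) (hM : M ≤ dist A B + 2 * δ - dist C A - dist C B) :
    Real.cos (∠ A C B) ≤ 1 - M ^ 2 / (2 * δ ^ 2) := by
  obtain ⟨A', hA'btw, hCA'⟩ := exists_wbtw_dist_eq hδ.le hA
  obtain ⟨B', hB'btw, hCB'⟩ := exists_wbtw_dist_eq hδ.le hB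
  have hA'C : A' ≠ C := fun h => hδ.ne' (by rw [← hCA', h, dist_self])
  have hB'C : B' ≠ C := fun h => hδ.ne' (by rw [← hCB', h, dist_self])
  have hangle : ∠ A' C B' = ∠ A C B :=
    (hA'btw.angle_eq_left B' hA'C).trans (hB'btw.angle_eq_right A hB'C)
  have hchord : dist A' B' ^ 2 = 2 * δ ^ 2 * (1 - Real.cos (∠ A C B)) := by
    have := law_cos A' C B'
    rw [dist_comm A' C, dist_comm B' C, hCA', hCB', hangle] at this
    linear_combination this
  have hM_le : M ≤ dist A' B' := by
    have hAA' := hA'btw.dist_add_dist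
    have hBB' := hB'btw.dist_add_dist
    linarith [dist_triangle4 A A' B' B, dist_comm A A', dist_comm B' B]
  rw [le_sub_iff_add_le, ← le_sub_iff_add_le', div_le_iff₀ (by positivity)]
  nlinarith [pow_le_pow_left₀ hM0 hM_le 2]

end Geometry

theorem IsOptimumTour.relocate_le_of_edgeIn {V : Type*} [Fintype V] [DecidableEq V]
    {l : V → V → ℝ} (hsymm : ∀ a b, l a b = l b a) {σ : Perm V} (hσ : IsOptimumTour l σ)
    {p q r : V} (hpq : edgeIn σ p q) (hrp : r ≠ p) (hrq : r ≠ q) :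
    l p q + l r (σ r) + l r (σ⁻¹ r) ≤ l p r + l q r + l (σ r) (σ⁻¹ r) := by
  rcases hpq with h | h
  · have := hσ.relocate_le hrp.symm (h ▸ hrq.symm)
    rw [h, hsymm (σ⁻¹ r), hsymm r q, hsymm (σ⁻¹ r)] at this
    exact this
  · have := hσ.relocate_le hrq.symm (h ▸ hrp.symm)
    rw [h, hsymm (σ⁻¹ r), hsymm r p, hsymm (σ⁻¹ r), hsymm q p] at this
    linarith

theorem angle_lower_bound_general {V : Type*} [Fintype V]
    (f : V → Plane)
    (l : V → V → ℝ) (hsymm : ∀ a b, l a b = l b a)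
    (hround : ∀ a b : V, l a b - 1/2 ≤ dist (f a) (f b) ∧ dist (f a) (f b) ≤ l a b + 1/2)
    (σ : Equiv.Perm V) (hopt : IsOptimumTour l σ)
    (p q r x y : V) (hpq : edgeIn σ p q) (hrp : r ≠ p) (hrq : r ≠ q)
    (hx : σ r = x) (hy : σ⁻¹ r = y)
    (δ lp lq : ℝ) (hδ : 0 < δ) (hδr : ∀ v : V, v ≠ r → δ ≤ dist (f r) (f v))
    (hlp : lp = δ + l p q - l q r - 1) (hlq : lq = δ + l p q - l p r - 1)
    (hbasic : l p q - 1/2 ≤ lp + lq) :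
    Real.cos (∠ (f x) (f r) (f y)) ≤
        1 - (lp + lq - l p q + 1/2) ^ 2 / (2 * δ ^ 2) ∧
    Real.arccos (1 - (lp + lq - l p q + 1/2) ^ 2 / (2 * δ ^ 2)) ≤
        ∠ (f x) (f r) (f y) := by
  classical
  have hxr : x ≠ r := hx ▸ hopt.1.2 r
  have hσy : σ y = r := hy ▸ σ.apply_symm_apply r
  have hyr : y ≠ r := fun h => hopt.1.2 r (by rwa [h] at hσy)
  have hexch := hopt.relocate_le_of_edgeIn hsymm hpq hrp hrq
  rw [hx, hy] at hexch
  have hM : lp + lq - l p q + 1/2 ≤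
      dist (f x) (f y) + 2 * δ - dist (f r) (f x) - dist (f r) (f y) := by
    linarith [(hround r x).2, (hround r y).2, (hround x y).1]
  have hcos := cos_angle_le_one_sub_sq_div hδ (hδr x hxr) (hδr y hyr) (by linarith) hM
  refine ⟨hcos, ?_⟩
  calc Real.arccos (1 - (lp + lq - l p q + 1/2) ^ 2 / (2 * δ ^ 2))
      ≤ Real.arccos (Real.cos (∠ (f x) (f r) (f y))) := Real.arccos_le_arccos hcos
    _ = ∠ (f x) (f r) (f y) := Real.arccos_cos (angle_nonneg _ _ _) (angle_le_pi _ _ _)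

/-- **Angle lower bound for optimum tours.** If an optimum tour of a planar EUC_2D
instance contains `pq`, the angle `γ` between the two tour edges at `r ∉ {p,q}`
satisfies `cos γ ≤ 1 − (l_p + l_q − l(pq) + 1/2)²/(2δ_r²)`, i.e. `γ ≥ γ_r`. -/
theorem angle_lower_bound {V : Type*} [Fintype V]
    (f : V → Plane) (hf : Function.Injective f)
    (l : V → V → ℝ) (hsymm : ∀ a b, l a b = l b a)
    (hround : ∀ a b : V, l a b - 1/2 ≤ dist (f a) (f b) ∧ dist (f a) (f b) ≤ l a b + 1/2)
    (σ : Equiv.Perm V) (hopt : IsOptimumTour l σ)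
    (p q r x y : V) (hpq : edgeIn σ p q) (hrp : r ≠ p) (hrq : r ≠ q)
    (hx : σ r = x) (hy : σ⁻¹ r = y)
    (δ lp lq : ℝ) (hδ : 0 < δ) (hδr : ∀ v : V, v ≠ r → δ ≤ dist (f r) (f v))
    (hlp : lp = δ + l p q - l q r - 1) (hlq : lq = δ + l p q - l p r - 1)
    (hbasic : l p q - 1/2 ≤ lp + lq) :
    Real.cos (∠ (f x) (f r) (f y)) ≤
        1 - (lp + lq - l p q + 1/2) ^ 2 / (2 * δ ^ 2) ∧
    Real.arccos (1 - (lp + lq - l p q + 1/2) ^ 2 / (2 * δ ^ 2)) ≤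
        ∠ (f x) (f r) (f y) :=
  angle_lower_bound_general f l hsymm hround σ hopt p q r x y hpq hrp hrq hx hy δ lp lq hδ hδr hlp
    hlq hbasic
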